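/- In the Steiner-tree hardness reduction graph Ĝ built from a degree-3 graph G (complete binary tree B̂ with leaves attached to V(G), pendant neighbors v̂ᵢ, and each edge e=(vᵢ,vⱼ) replaced by a new terminal vertex v'ₑ adjacent to vᵢ and vⱼ), with terminals 𝓣 = {v'ₑ : e ∈ E} ∪ V(B̂): the minimum secluded Steiner tree cost equals |𝓣| + |V(G)| + τ(G), where τ(G) is the minimum vertex cover size of G. -/

import Mathlib

open Finset

/-- Vertices of the Steiner-tree reduction graph `Ĝ`: the `2n−1` nodes of a complete binary
tree `B̂` (in heap order, node `a` has children `2a+1, 2a+2`; its leaves are the nodes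
`n−1,…,2n−2`), the original vertices `vᵢ` of `G`, the pendant vertices `v̂ᵢ`, and one
vertex `v'ₑ` for each edge `e` of `G`. -/
abbrev V18 (n m : ℕ) := Fin (2 * n - 1) ⊕ (Fin n ⊕ (Fin n ⊕ Fin m))

/-- Node of the complete binary tree `B̂`. -/
def tnode {n m : ℕ} (a : Fin (2 * n - 1)) : V18 n m := Sum.inl a
/-- Original vertex `vᵢ`. -/
def origv {n m : ℕ} (i : Fin n) : V18 n m := Sum.inr (Sum.inl i)
/-- Pendant vertex `v̂ᵢ`. -/
def hatv {n m : ℕ} (i : Fin n) : V18 n m := Sum.inr (Sum.inr (Sum.inl i))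
/-- Edge vertex `v'ₑ` for the `j`-th edge. -/
def edgev {n m : ℕ} (j : Fin m) : V18 n m := Sum.inr (Sum.inr (Sum.inr j))

/-- Adjacency (one orientation; symmetrized by `fromRel`): binary-tree edges of `B̂`,
leaf `ℓᵢ` (heap node `n−1+i`) joined to `vᵢ`, pendant edges `vᵢ–v̂ᵢ`, and for each edge
`e = (vᵢ,vⱼ)` of `G` the two edges `v'ₑ–vᵢ`, `v'ₑ–vⱼ`. -/
def adj18 (n m : ℕ) (edges : Fin m → Fin n × Fin n) : V18 n m → V18 n m → Bool
  | Sum.inl a, Sum.inl b => (b.val == 2 * a.val + 1) || (b.val == 2 * a.val + 2)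
  | Sum.inl a, Sum.inr (Sum.inl i) => a.val == (n - 1) + i.val
  | Sum.inr (Sum.inl i), Sum.inr (Sum.inr (Sum.inl i')) => i == i'
  | Sum.inr (Sum.inl i), Sum.inr (Sum.inr (Sum.inr j)) =>
      (edges j).1 == i || (edges j).2 == i
  | _, _ => false

/-- The Steiner-tree reduction graph `Ĝ`. -/
def G18 (n m : ℕ) (edges : Fin m → Fin n × Fin n) : SimpleGraph (V18 n m) :=
  SimpleGraph.fromRel (fun a b => adj18 n m edges a b = true)

/-- The terminal set `𝓣 = {v'ₑ : e ∈ E} ∪ V(B̂)`. -/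
def T18 (n m : ℕ) : Set (V18 n m) :=
  {v | (∃ a, v = tnode a) ∨ (∃ j, v = edgev j)}

/-- The exposure cost of a subgraph of `Ĝ`. -/
noncomputable def scost {V : Type*} (G : SimpleGraph V) (T : G.Subgraph) : ℕ :=
  (T.verts ∪ {v | ∃ u ∈ T.verts, G.Adj u v}).ncard

/-- `q*(𝓣)`: the minimum exposure cost of a Steiner tree (connected subgraph) spanning `𝓣`. -/
noncomputable def qstar18 (n m : ℕ) (edges : Fin m → Fin n × Fin n) : ℕ :=
  sInf {c | ∃ T : (G18 n m edges).Subgraph,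
    T.Connected ∧ T18 n m ⊆ T.verts ∧ scost (G18 n m edges) T = c}

/-- `τ(G)`: the minimum size of a vertex cover of `G`. -/
noncomputable def tau (n m : ℕ) (edges : Fin m → Fin n × Fin n) : ℕ :=
  sInf {c | ∃ C : Finset (Fin n),
    (∀ j, (edges j).1 ∈ C ∨ (edges j).2 ∈ C) ∧ C.card = c}

/-! A minimum vertex cover `C` of `G` yields a connected subgraph of `Ĝ`: the tree `B̂`, the
vertices `vᵢ` with `i ∈ C`, and all edge vertices `v'ₑ` (each hangs off an endpoint in `C`).
Its closed neighbourhood consists of `B̂`, all `vᵢ`, all `v'ₑ`, and the pendants `v̂ᵢ` with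
`i ∈ C`. Conversely, in any connected subgraph through all terminals every `v'ₑ` has a
neighbour `vᵢ`, so the used `vᵢ` form a vertex cover, and their pendants are exposed. -/

open SimpleGraph

theorem SimpleGraph.induce_connected_of_exists_adj_lt {V : Type*} {G : SimpleGraph V}
    {s : Set V} {r : V} (hr : r ∈ s) (μ : V → ℕ)
    (hμ : ∀ v ∈ s, v ≠ r → ∃ w ∈ s, G.Adj v w ∧ μ w < μ v) : (G.induce s).Connected := by
  have reach : ∀ k v (hv : v ∈ s), μ v = k → (G.induce s).Reachable ⟨r, hr⟩ ⟨v, hv⟩ := by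
    intro k
    induction k using Nat.strong_induction_on with
    | _ k ih =>
      intro v hv hvk
      by_cases hvr : v = r
      · subst hvr; rfl
      obtain ⟨w, hw, hvw, hwv⟩ := hμ v hv hvr
      have hadj : (G.induce s).Adj ⟨w, hw⟩ ⟨v, hv⟩ := hvw.symm
      exact (ih _ (hvk ▸ hwv) w hw rfl).trans hadj.reachable
  exact (connected_iff_exists_forall_reachable _).mpr ⟨⟨r, hr⟩, fun ⟨v, hv⟩ => reach _ v hv rfl⟩

def closedNbhd {V : Type*} (G : SimpleGraph V) (s : Set V) : Set V :=
  s ∪ {v | ∃ u ∈ s, G.Adj u v}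

section Reduction

variable {n m : ℕ} {edges : Fin m → Fin n × Fin n}

lemma G18_adj_iff {u v : V18 n m} :
    (G18 n m edges).Adj u v ↔
      u ≠ v ∧ (adj18 n m edges u v = true ∨ adj18 n m edges v u = true) :=
  fromRel_adj _ u v

lemma G18_adj_tnode_child {a b : Fin (2 * n - 1)}
    (h : b.val = 2 * a.val + 1 ∨ b.val = 2 * a.val + 2) :
    (G18 n m edges).Adj (tnode a) (tnode b) := by
  refine G18_adj_iff.mpr ⟨fun hab => ?_, Or.inl ?_⟩
  · cases Sum.inl_injective hab
    omega
  · simpa only [tnode, adj18, Bool.or_eq_true, beq_iff_eq] using h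

lemma G18_adj_leaf {a : Fin (2 * n - 1)} {i : Fin n} (h : a.val = n - 1 + i.val) :
    (G18 n m edges).Adj (tnode a) (origv i) :=
  G18_adj_iff.mpr ⟨by simp [tnode, origv], Or.inl (by simpa [tnode, origv, adj18] using h)⟩

lemma G18_adj_pendant (i : Fin n) : (G18 n m edges).Adj (origv i) (hatv i) :=
  G18_adj_iff.mpr ⟨by simp [hatv, origv], Or.inl (by simp [hatv, origv, adj18])⟩

lemma G18_adj_edgev {i : Fin n} {j : Fin m} (h : (edges j).1 = i ∨ (edges j).2 = i) :
    (G18 n m edges).Adj (origv i) (edgev j) :=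
  G18_adj_iff.mpr ⟨by simp [edgev, origv],
    Or.inl (by simpa only [origv, edgev, adj18, Bool.or_eq_true, beq_iff_eq] using h)⟩

lemma G18_adj_tnode_cases {a : Fin (2 * n - 1)} {v : V18 n m}
    (h : (G18 n m edges).Adj (tnode a) v) :
    (∃ b, v = tnode b) ∨ ∃ i, v = origv i := by
  obtain ⟨-, h | h⟩ := G18_adj_iff.mp h <;>
    rcases v with b | i | i | j <;>
    simp [adj18, tnode, origv] at h ⊢

lemma G18_adj_origv_cases {i : Fin n} {v : V18 n m}
    (h : (G18 n m edges).Adj (origv i) v) :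
    (∃ b, v = tnode b) ∨ v = hatv i ∨ ∃ j, v = edgev j := by
  obtain ⟨-, h | h⟩ := G18_adj_iff.mp h <;>
    rcases v with b | i' | i' | j <;>
    (simp [adj18, tnode, origv, hatv, edgev] at h ⊢ <;> tauto)

lemma G18_adj_edgev_cases {j : Fin m} {v : V18 n m}
    (h : (G18 n m edges).Adj (edgev j) v) :
    ∃ i, v = origv i ∧ ((edges j).1 = i ∨ (edges j).2 = i) := by
  obtain ⟨-, h | h⟩ := G18_adj_iff.mp h <;>
    rcases v with b | i' | i' | j' <;>
    (simp [adj18, origv, edgev] at h ⊢ <;> tauto)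

lemma tau_le_card {C : Finset (Fin n)} (hC : ∀ j, (edges j).1 ∈ C ∨ (edges j).2 ∈ C) :
    tau n m edges ≤ C.card :=
  Nat.sInf_le ⟨C, hC, rfl⟩

lemma exists_vertexCover_card_eq_tau :
    ∃ C : Finset (Fin n), (∀ j, (edges j).1 ∈ C ∨ (edges j).2 ∈ C) ∧
      C.card = tau n m edges :=
  Nat.sInf_mem (s := {c | ∃ C : Finset (Fin n),
    (∀ j, (edges j).1 ∈ C ∨ (edges j).2 ∈ C) ∧ C.card = c})
    ⟨n, univ, fun _ => Or.inl (mem_univ _), card_fin n⟩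

variable (n m) in
/-- The vertices of `B̂`, the `vᵢ` with `i ∈ C`, and all `v'ₑ`. -/
def coverTreeVerts (C : Finset (Fin n)) : Finset (V18 n m) :=
  univ.disjSum (C.disjSum ((∅ : Finset (Fin n)).disjSum univ))

variable (n m) in
/-- The vertices of `B̂`, all `vᵢ`, the `v̂ᵢ` with `i ∈ C`, and all `v'ₑ`. -/
def coverTreeNbhd (C : Finset (Fin n)) : Finset (V18 n m) :=
  univ.disjSum (univ.disjSum (C.disjSum univ))

lemma card_coverTreeNbhd (C : Finset (Fin n)) :
    (coverTreeNbhd n m C).card = (2 * n - 1) + (n + (C.card + m)) := by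
  simp [coverTreeNbhd, card_disjSum]

lemma coverTreeNbhd_subset_closedNbhd {C : Finset (Fin n)} {s : Set (V18 n m)}
    (htree : ∀ a, tnode a ∈ s) (hedge : ∀ j, edgev j ∈ s) (hC : ∀ i ∈ C, origv i ∈ s) :
    ↑(coverTreeNbhd n m C) ⊆ closedNbhd (G18 n m edges) s := by
  rintro (a | i | i | j) hx <;>
    simp only [coverTreeNbhd, mem_coe, inl_mem_disjSum, inr_mem_disjSum] at hx
  · exact Or.inl (htree a)
  · have hleaf : n - 1 + i.val < 2 * n - 1 := by omega
    exact Or.inr ⟨_, htree ⟨_, hleaf⟩, G18_adj_leaf rfl⟩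
  · exact Or.inr ⟨_, hC i hx, G18_adj_pendant i⟩
  · exact Or.inl (hedge j)

lemma closedNbhd_coverTreeVerts (C : Finset (Fin n)) :
    closedNbhd (G18 n m edges) ↑(coverTreeVerts n m C) = ↑(coverTreeNbhd n m C) := by
  refine subset_antisymm ?_ (coverTreeNbhd_subset_closedNbhd
    (by simp [coverTreeVerts, tnode]) (by simp [coverTreeVerts, edgev])
    (by simp [coverTreeVerts, origv]))
  rintro x (hx | ⟨u, hu, hux⟩)
  · rcases x with a | i | i | j <;> simp [coverTreeVerts, coverTreeNbhd] at hx ⊢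
  · rcases u with a | i | i | j <;>
      simp only [coverTreeVerts, mem_coe, inl_mem_disjSum, inr_mem_disjSum] at hu
    · rcases G18_adj_tnode_cases hux with ⟨b, rfl⟩ | ⟨i, rfl⟩ <;>
        simp [coverTreeNbhd, tnode, origv]
    · rcases G18_adj_origv_cases hux with ⟨b, rfl⟩ | rfl | ⟨j, rfl⟩ <;>
        simp [coverTreeNbhd, tnode, hatv, edgev, hu]
    · simp at hu
    · obtain ⟨i, rfl, -⟩ := G18_adj_edgev_cases hux
      simp [coverTreeNbhd, origv]

lemma coverTree_connected (hn : 1 ≤ n) {C : Finset (Fin n)}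
    (hC : ∀ j, (edges j).1 ∈ C ∨ (edges j).2 ∈ C) :
    ((⊤ : (G18 n m edges).Subgraph).induce ↑(coverTreeVerts n m C)).Connected := by
  rw [← connected_induce_iff]
  have hroot : 0 < 2 * n - 1 := by omega
  -- every vertex other than the root has a neighbour of smaller rank: its parent in `B̂`,
  -- its leaf `ℓᵢ`, or an endpoint `vᵢ` with `i ∈ C`
  refine induce_connected_of_exists_adj_lt (r := tnode ⟨0, hroot⟩)
    (by simp [coverTreeVerts, tnode])
    (Sum.elim Fin.val (Sum.elim (fun _ => 2 * n) fun _ => 2 * n + 1)) ?_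
  rintro (a | i | i | j) hv hne <;>
    simp only [coverTreeVerts, mem_coe, inl_mem_disjSum, inr_mem_disjSum] at hv
  · have ha : a.val ≠ 0 := fun h => hne (congrArg Sum.inl (Fin.ext h))
    have hp : (a.val - 1) / 2 < 2 * n - 1 := by omega
    exact ⟨tnode ⟨_, hp⟩, by simp [coverTreeVerts, tnode],
      (G18_adj_tnode_child (by simp only; omega)).symm, by simp only [tnode, Sum.elim_inl]; omega⟩
  · have hleaf : n - 1 + i.val < 2 * n - 1 := by omega
    exact ⟨tnode ⟨_, hleaf⟩, by simp [coverTreeVerts, tnode], (G18_adj_leaf rfl).symm,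
      by simp only [tnode, Sum.elim_inl, Sum.elim_inr]; omega⟩
  · simp at hv
  · obtain ⟨i, hi, hij⟩ : ∃ i ∈ C, (edges j).1 = i ∨ (edges j).2 = i :=
      (hC j).elim (fun h => ⟨_, h, Or.inl rfl⟩) (fun h => ⟨_, h, Or.inr rfl⟩)
    exact ⟨origv i, by simpa [coverTreeVerts, origv], (G18_adj_edgev hij).symm,
      by simp [origv]⟩

lemma scost_coverTree (C : Finset (Fin n)) :
    scost (G18 n m edges) ((⊤ : (G18 n m edges).Subgraph).induce ↑(coverTreeVerts n m C)) =
      (2 * n - 1) + (n + (C.card + m)) := by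
  rw [← card_coverTreeNbhd, ← Set.ncard_coe_finset, ← closedNbhd_coverTreeVerts]
  rfl

lemma exists_origv_mem_verts_of_connected (hn : 1 ≤ n) {T : (G18 n m edges).Subgraph}
    (hc : T.Connected) (hs : T18 n m ⊆ T.verts) (j : Fin m) :
    ∃ i, origv i ∈ T.verts ∧ ((edges j).1 = i ∨ (edges j).2 = i) := by
  have hroot : tnode ⟨0, by omega⟩ ∈ T.verts := hs (Or.inl ⟨_, rfl⟩)
  have hj : edgev j ∈ T.verts := hs (Or.inr ⟨j, rfl⟩)
  have : Nontrivial T.verts := ⟨⟨_, hj⟩, ⟨_, hroot⟩, by simp [edgev, tnode]⟩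
  obtain ⟨w, hw⟩ := hc.preconnected.exists_adj_of_nontrivial ⟨_, hj⟩
  obtain ⟨i, rfl, hi⟩ := G18_adj_edgev_cases (T.adj_sub hw)
  exact ⟨i, T.edge_vert hw.symm, hi⟩

lemma le_scost_of_connected (hn : 1 ≤ n) {T : (G18 n m edges).Subgraph}
    (hc : T.Connected) (hs : T18 n m ⊆ T.verts) :
    (2 * n - 1) + (n + (tau n m edges + m)) ≤ scost (G18 n m edges) T := by
  classical
  set C := univ.filter fun i => origv i ∈ T.verts
  have hC : ∀ j, (edges j).1 ∈ C ∨ (edges j).2 ∈ C := fun j => by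
    obtain ⟨i, hi, rfl | rfl⟩ := exists_origv_mem_verts_of_connected hn hc hs j <;> simp [C, hi]
  have hsub : ↑(coverTreeNbhd n m C) ⊆ closedNbhd (G18 n m edges) T.verts :=
    coverTreeNbhd_subset_closedNbhd (fun a => hs (Or.inl ⟨a, rfl⟩))
      (fun j => hs (Or.inr ⟨j, rfl⟩)) (fun i hi => (mem_filter.mp hi).2)
  calc (2 * n - 1) + (n + (tau n m edges + m))
      ≤ (2 * n - 1) + (n + (C.card + m)) := by grw [tau_le_card hC]
    _ = (coverTreeNbhd n m C : Set (V18 n m)).ncard := by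
      rw [Set.ncard_coe_finset, card_coverTreeNbhd]
    _ ≤ scost (G18 n m edges) T := Set.ncard_le_ncard hsub (Set.toFinite _)

end Reduction

theorem qstar_eq_terminals_add_vertexCover_general (n m : ℕ) (hn : 1 ≤ n)
    (edges : Fin m → Fin n × Fin n) :
    qstar18 n m edges = ((2 * n - 1) + m) + n + tau n m edges := by
  obtain ⟨C, hC, hCcard⟩ := exists_vertexCover_card_eq_tau (edges := edges)
  have hmem : ((2 * n - 1) + m) + n + tau n m edges ∈ {c | ∃ T : (G18 n m edges).Subgraph,
      T.Connected ∧ T18 n m ⊆ T.verts ∧ scost (G18 n m edges) T = c} := by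
    refine ⟨_, coverTree_connected hn hC, ?_, by rw [scost_coverTree, hCcard]; omega⟩
    rintro _ (⟨a, rfl⟩ | ⟨j, rfl⟩) <;> simp [coverTreeVerts, tnode, edgev]
  refine le_antisymm (Nat.sInf_le hmem) (le_csInf ⟨_, hmem⟩ ?_)
  rintro c ⟨T, hc, hs, rfl⟩
  have := le_scost_of_connected hn hc hs
  omega

/-- In the Steiner-tree hardness reduction graph `Ĝ` built from a simple graph `G` of
maximum degree 3, the minimum secluded Steiner tree cost for the terminals
`𝓣 = {v'ₑ} ∪ V(B̂)` equals `|𝓣| + |V(G)| + τ(G)`, where `|𝓣| = (2n−1) + m`. -/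
theorem qstar_eq_terminals_add_vertexCover (n m : ℕ) (hn : 1 ≤ n)
    (edges : Fin m → Fin n × Fin n)
    (hsimple : ∀ j, (edges j).1 ≠ (edges j).2)
    (hdeg3 : ∀ i : Fin n,
      (univ.filter (fun j => (edges j).1 = i ∨ (edges j).2 = i)).card ≤ 3) :
    qstar18 n m edges = ((2 * n - 1) + m) + n + tau n m edges :=
  qstar_eq_terminals_add_vertexCover_general n m hn edges
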